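/- For even n ≥ 4 and m ≥ 3, the radio number of the Cartesian product P_n □ K_m of the path on n vertices and the complete graph on m vertices equals (mn² − 2n + 2)/2. -/

import Mathlib

open SimpleGraph Finset

/-- The Petersen graph as the Kneser graph K(5,2). -/
def petersen : SimpleGraph {s : Finset (Fin 5) // s.card = 2} where
  Adj a b := Disjoint a.1 b.1
  symm := ⟨fun _ _ h => h.symm⟩
  loopless := ⟨fun a h => by
    have h0 : a.1 = ⊥ := disjoint_self.mp h
    have h2 := a.2
    rw [h0] at h2
    simp at h2⟩

/-- A radio labeling of `G`: for all distinct `u, v`,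
`d(u,v) + |φ(u) - φ(v)| ≥ diam(G) + 1`. -/
def IsRadioLabeling {V : Type*} (G : SimpleGraph V) (φ : V → ℕ) : Prop :=
  ∀ u v : V, u ≠ v → (G.diam : ℤ) + 1 ≤ (G.dist u v : ℤ) + |(φ u : ℤ) - (φ v : ℤ)|

/-- The span of a labeling: the maximum difference between two labels. -/
noncomputable def span {V : Type*} (φ : V → ℕ) : ℕ :=
  sSup (Set.range fun p : V × V => φ p.1 - φ p.2)

/-- The radio number of `G`: the minimum span over all radio labelings. -/
noncomputable def radioNumber {V : Type*} (G : SimpleGraph V) : ℕ :=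
  sInf {s | ∃ φ : V → ℕ, IsRadioLabeling G φ ∧ span φ = s}

/-- `d(v, S)`: the minimum distance from `v` to a vertex of `S`. -/
noncomputable def distToSet {V : Type*} (G : SimpleGraph V) (v : V) (S : Finset V) : ℕ :=
  sInf ((fun w => G.dist v w) '' ↑S)

/-- `diam(S)`: the maximum distance in `G` between two vertices of `S`. -/
noncomputable def setDiam {V : Type*} (G : SimpleGraph V) (S : Finset V) : ℕ :=
  sSup {d | ∃ x ∈ S, ∃ y ∈ S, G.dist x y = d}

/-!
Write `n = 2k` and `L (a, b) = |2a + 1 - n|`, twice the distance from column `a` of the path to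
its central edge. Since `d(u, v) ≤ |a - a'| + 1`, we have `2 d(u, v) ≤ L u + L v + 2`. Listing
the vertices by increasing label, consecutive vertices `x, y` satisfy
`φ y - φ x ≥ n + 1 - d(x, y)`; summing over the `nm - 1` consecutive pairs, every vertex
contributes `L` twice except the first and last, each of which has `L ≥ 1` because `n` is even.
As `∑ L = m n² / 2`, this gives `2 span φ ≥ m n² - 2n + 2`.

Equality is attained by alternating between the two halves of the path, so that consecutive
vertices are about `k` columns apart and the label only has to grow by about `k` at each step.
-/

namespace SimpleGraph

variable {V W α β : Type*}

lemma Walk.abs_sub_le_length {G : SimpleGraph V} (f : V → ℤ)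
    (hf : ∀ ⦃u v⦄, G.Adj u v → |f u - f v| ≤ 1) {u v : V} (w : G.Walk u v) :
    |f u - f v| ≤ w.length := by
  induction w with
  | nil => simp
  | @cons a b c h w ih =>
    rw [Walk.length_cons, Nat.cast_succ]
    linarith [abs_sub_le (f a) (f b) (f c), hf h]

lemma Reachable.abs_sub_le_dist {G : SimpleGraph V} (f : V → ℤ)
    (hf : ∀ ⦃u v⦄, G.Adj u v → |f u - f v| ≤ 1) {u v : V} (huv : G.Reachable u v) :
    |f u - f v| ≤ G.dist u v := by
  obtain ⟨w, hw⟩ := huv.exists_walk_length_eq_dist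
  exact hw ▸ w.abs_sub_le_length f hf

lemma dist_boxProd {G : SimpleGraph α} {H : SimpleGraph β} (hG : G.Preconnected)
    (hH : H.Preconnected) (x y : α × β) :
    (G □ H).dist x y = G.dist x.1 y.1 + H.dist x.2 y.2 := by
  rw [dist, edist_boxProd, ENat.toNat_add (edist_ne_top_iff_reachable.2 (hG _ _))
    (edist_ne_top_iff_reachable.2 (hH _ _))]
  rfl

lemma dist_pathGraph_le_of_add_eq {n : ℕ} (d : ℕ) :
    ∀ {i j : Fin n}, i.val + d = j.val → (pathGraph n).dist i j ≤ d := by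
  induction d with
  | zero => intro i j h; simp [show i = j from Fin.ext (by omega)]
  | succ d ih =>
    intro i j h
    let i' : Fin n := ⟨i + 1, by omega⟩
    have hadj : (pathGraph n).Adj i i' := pathGraph_adj.2 (Or.inl rfl)
    have := hadj.reachable.dist_triangle_left j
    rw [dist_eq_one_iff_adj.2 hadj] at this
    linarith [ih (i := i') (j := j) (by simp [i']; omega)]

lemma dist_pathGraph {n : ℕ} (i j : Fin n) :
    ((pathGraph n).dist i j : ℤ) = |(i : ℤ) - j| := by
  refine le_antisymm ?_
    ((pathGraph_preconnected n i j).abs_sub_le_dist (fun v : Fin n ↦ (v : ℤ)) fun u v h ↦ ?_)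
  · rcases le_total i j with h | h
    · have := dist_pathGraph_le_of_add_eq (j - i) (i := i) (j := j) (by omega)
      rw [abs_sub_comm, abs_of_nonneg (by omega)]
      omega
    · have := dist_pathGraph_le_of_add_eq (i - j) (i := j) (j := i) (by omega)
      rw [dist_comm, abs_of_nonneg (by omega)]
      omega
  · rw [pathGraph_adj] at h
    rw [abs_le]
    omega

lemma Preconnected.diam_eq {G : SimpleGraph V} (hG : G.Preconnected) {d : ℕ}
    (hle : ∀ u v, G.dist u v ≤ d) {u v : V} (huv : G.dist u v = d) : G.diam = d := by
  have hedist : ∀ u v, G.edist u v = G.dist u v := fun u v ↦ (hG u v).coe_dist_eq_edist.symm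
  suffices G.ediam = d by rw [diam, this, ENat.toNat_natCast]
  refine le_antisymm (ediam_le_of_edist_le fun u v ↦ ?_) ?_
  · rw [hedist]; exact_mod_cast hle u v
  · rw [← huv, ← hedist]; exact edist_le_ediam

lemma dist_pathGraph_boxProd_top [DecidableEq W] {n : ℕ} (u v : Fin n × W) :
    ((pathGraph n □ (⊤ : SimpleGraph W)).dist u v : ℤ) =
      |(u.1 : ℤ) - v.1| + if u.2 = v.2 then 0 else 1 := by
  rw [dist_boxProd (pathGraph_preconnected n) preconnected_top, dist_top, Nat.cast_add,
    dist_pathGraph]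
  split_ifs <;> rfl

lemma diam_pathGraph_boxProd_top [Nontrivial W] {n : ℕ} (hn : n ≠ 0) :
    (pathGraph n □ (⊤ : SimpleGraph W)).diam = n := by
  classical
  obtain ⟨b, b', hb⟩ := exists_pair_ne W
  refine ((pathGraph_preconnected n).boxProd preconnected_top).diam_eq (u := (⟨0, by omega⟩, b))
    (v := (⟨n - 1, by omega⟩, b')) (fun u v ↦ ?_) ?_
  · have := dist_pathGraph_boxProd_top u v
    have : |(u.1 : ℤ) - v.1| ≤ n - 1 := abs_sub_le_iff.2 ⟨by omega, by omega⟩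
    split_ifs at * <;> omega
  · have := dist_pathGraph_boxProd_top (n := n) (⟨0, by omega⟩, b) (⟨n - 1, by omega⟩, b')
    rw [if_neg hb, abs_sub_comm, abs_of_nonneg (by simp)] at this
    dsimp only at this
    omega

end SimpleGraph

section RadioLabeling

variable {V : Type*} {G : SimpleGraph V} {φ : V → ℕ}

lemma sub_le_span [Finite V] (φ : V → ℕ) (u v : V) : φ u - φ v ≤ span φ :=
  le_csSup (Set.finite_range _).bddAbove ⟨(u, v), rfl⟩

lemma span_eq_of_le {T : ℕ} (hle : ∀ v, φ v ≤ T) {u w : V} (hu : φ u = T) (hw : φ w = 0) :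
    span φ = T := by
  refine le_antisymm (csSup_le' ?_) (le_csSup ⟨T, ?_⟩ ⟨(u, w), by simp [hu, hw]⟩)
  all_goals rintro _ ⟨p, rfl⟩; exact (Nat.sub_le _ _).trans (hle p.1)

lemma radioNumber_eq {s : ℕ} (hex : ∃ φ, IsRadioLabeling G φ ∧ span φ = s)
    (hle : ∀ φ, IsRadioLabeling G φ → s ≤ span φ) : radioNumber G = s :=
  IsLeast.csInf_eq ⟨hex, by rintro _ ⟨φ, hφ, rfl⟩; exact hle φ hφ⟩

lemma IsRadioLabeling.of_lt {ι : Type*} [LinearOrder ι] (e : ι ≃ V) (ψ : ι → ℕ)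
    (h : ∀ s t, s < t → (G.diam : ℤ) + 1 ≤ G.dist (e s) (e t) + |(ψ s : ℤ) - ψ t|) :
    IsRadioLabeling G (ψ ∘ e.symm) := by
  intro u v huv
  obtain ⟨s, rfl⟩ := e.surjective u
  obtain ⟨t, rfl⟩ := e.surjective v
  simp only [Function.comp_apply, Equiv.symm_apply_apply]
  rcases lt_or_gt_of_ne (e.injective.ne_iff.1 huv) with hst | hts
  · exact h s t hst
  · rw [G.dist_comm, abs_sub_comm]
    exact h t s hts

lemma exists_equiv_fin_monotone {α : Type*} [LinearOrder α] [Fintype V] (f : V → α) {N : ℕ}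
    (hN : Fintype.card V = N) :
    ∃ e : Fin N ≃ V, Monotone (f ∘ e) :=
  let e₀ := (Fintype.equivFinOfCardEq hN).symm
  ⟨(Tuple.sort (f ∘ e₀)).trans e₀, Tuple.monotone_sort (f ∘ e₀)⟩

theorem IsRadioLabeling.le_span_of_two_mul_dist_le [Fintype V] [Nonempty V]
    (hφ : IsRadioLabeling G φ) (L : V → ℤ) {c ℓ : ℤ}
    (hL : ∀ u v, u ≠ v → 2 * (G.dist u v : ℤ) ≤ L u + L v + c) (hℓ : ∀ v, ℓ ≤ L v) :
    (Fintype.card V - 1 : ℤ) * (2 * G.diam + 2 - c) + 2 * ℓ ≤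
      2 * ∑ v, L v + 2 * span φ := by
  obtain ⟨N, hN⟩ := Nat.exists_eq_add_one_of_ne_zero (Fintype.card_ne_zero (α := V))
  obtain ⟨e, he⟩ := exists_equiv_fin_monotone φ hN
  have hstep : ∀ i : Fin N, 2 * G.diam + 2 - c ≤
      L (e i.castSucc) + L (e i.succ) + 2 * ((φ (e i.succ) : ℤ) - φ (e i.castSucc)) := by
    intro i
    have hne : e i.castSucc ≠ e i.succ := e.injective.ne (Fin.castSucc_lt_succ (i := i)).ne
    have hmono : φ (e i.castSucc) ≤ φ (e i.succ) := he (Fin.castSucc_lt_succ (i := i)).le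
    have := hφ _ _ hne
    rw [abs_sub_comm, abs_of_nonneg (by omega)] at this
    linarith [hL _ _ hne]
  have hsum := Finset.sum_le_sum fun i (_ : i ∈ Finset.univ) ↦ hstep i
  simp only [Finset.sum_add_distrib, ← Finset.mul_sum, Finset.sum_sub_distrib, Finset.sum_const,
    Finset.card_univ, Fintype.card_fin, nsmul_eq_mul] at hsum
  set first := e 0
  set last := e (Fin.last N)
  have hL₁ : ∑ v, L v = ∑ i : Fin N, L (e i.castSucc) + L last := by
    rw [← e.sum_comp L, Fin.sum_univ_castSucc]
  have hL₂ : ∑ v, L v = L first + ∑ i : Fin N, L (e i.succ) := by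
    rw [← e.sum_comp L, Fin.sum_univ_succ]
  have hφ₁ : ∑ v, (φ v : ℤ) = ∑ i : Fin N, (φ (e i.castSucc) : ℤ) + φ last := by
    rw [← e.sum_comp, Fin.sum_univ_castSucc]
  have hφ₂ : ∑ v, (φ v : ℤ) = φ first + ∑ i : Fin N, (φ (e i.succ) : ℤ) := by
    rw [← e.sum_comp, Fin.sum_univ_succ]
  have hspan : (φ last : ℤ) - φ first ≤ span φ := by
    have := sub_le_span φ last first
    omega
  rw [hN, Nat.cast_add_one, add_sub_cancel_right]
  linarith [hℓ first, hℓ last]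

end RadioLabeling

lemma sum_range_abs_two_mul_add_one_sub (k : ℕ) :
    ∑ a ∈ Finset.range (2 * k), |2 * (a : ℤ) + 1 - 2 * k| = 2 * k ^ 2 := by
  induction k with
  | zero => simp
  | succ k ih =>
    rw [show 2 * (k + 1) = 2 * k + 1 + 1 by ring, Finset.sum_range_succ, Finset.sum_range_succ']
    simp only [Nat.cast_add, Nat.cast_one, Nat.cast_zero]
    have hmid : ∀ a ∈ Finset.range (2 * k),
        |2 * ((a : ℤ) + 1) + 1 - 2 * ((k : ℤ) + 1)| = |2 * (a : ℤ) + 1 - 2 * k| :=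
      fun a _ ↦ by ring_nf
    rw [Finset.sum_congr rfl hmid, ih, abs_of_nonpos (by omega), abs_of_nonneg (by omega)]
    push_cast
    ring

section LowerBound

variable {n m : ℕ}

lemma two_mul_dist_pathGraph_boxProd_top_le (u v : Fin n × Fin m) :
    2 * ((pathGraph n □ (⊤ : SimpleGraph (Fin m))).dist u v : ℤ) ≤
      |2 * (u.1 : ℤ) + 1 - n| + |2 * (v.1 : ℤ) + 1 - n| + 2 := by
  have h := abs_sub (2 * (u.1 : ℤ) + 1 - n) (2 * (v.1 : ℤ) + 1 - n)
  rw [show 2 * (u.1 : ℤ) + 1 - n - (2 * v.1 + 1 - n) = 2 * (u.1 - v.1) by ring, abs_mul,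
    abs_two] at h
  rw [dist_pathGraph_boxProd_top]
  split_ifs <;> linarith

lemma sum_prod_abs_two_mul_add_one_sub {k : ℕ} :
    ∑ u : Fin (2 * k) × Fin m, |2 * (u.1 : ℤ) + 1 - (2 * k : ℕ)| = m * (2 * k ^ 2) := by
  rw [Fintype.sum_prod_type]
  simp only [Finset.sum_const, Finset.card_univ, Fintype.card_fin, nsmul_eq_mul]
  rw [← Finset.mul_sum, Fin.sum_univ_eq_sum_range (fun a ↦ |2 * (a : ℤ) + 1 - (2 * k : ℕ)|),
    Nat.cast_mul, Nat.cast_two, sum_range_abs_two_mul_add_one_sub, mul_comm]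

theorem IsRadioLabeling.pathGraph_boxProd_top_le_two_mul_span (hn : n ≠ 0) (he : Even n)
    (hm : 2 ≤ m) {φ : Fin n × Fin m → ℕ}
    (hφ : IsRadioLabeling (pathGraph n □ (⊤ : SimpleGraph (Fin m))) φ) :
    m * n ^ 2 - 2 * n + 2 ≤ 2 * span φ := by
  obtain ⟨k, rfl⟩ := even_iff_two_dvd.1 he
  have : NeZero (2 * k) := ⟨hn⟩
  have : NeZero m := ⟨by omega⟩
  have : Nontrivial (Fin m) := Fin.nontrivial_iff_two_le.2 hm
  have := hφ.le_span_of_two_mul_dist_le (fun u ↦ |2 * (u.1 : ℤ) + 1 - (2 * k : ℕ)|)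
    (c := 2) (fun u v _ ↦ two_mul_dist_pathGraph_boxProd_top_le u v)
    (ℓ := 1) (fun u ↦ Int.one_le_abs (by omega))
  rw [sum_prod_abs_two_mul_add_one_sub, diam_pathGraph_boxProd_top hn] at this
  simp only [Fintype.card_prod, Fintype.card_fin] at this
  push_cast at this
  have hk : 1 ≤ k := by omega
  zify [show 2 * (2 * k) ≤ m * (2 * k) ^ 2 by nlinarith]
  linarith

end LowerBound

lemma Nat.add_mod_ne_mod {a d m : ℕ} (hd : 0 < d) (hdm : d < m) : (a + d) % m ≠ a % m := by
  intro h
  have : d ≡ 0 [MOD m] := Nat.ModEq.add_left_cancel' a (h.trans (by rw [add_zero]))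
  rw [Nat.ModEq, Nat.zero_mod, Nat.mod_eq_of_lt hdm] at this
  omega

namespace PathBoxComplete

/- The optimal order on `P_{2k} □ K_m`: write `s = 2j + ε` with `ε < 2` and `j = q m + r` with
`r < m`. The `s`-th vertex is `(k - 1 - q, r)` if `ε = 0` and `(2k - 1 - q, r + 2 mod m)` if
`ε = 1`, and its label is `k s - q`. -/

def block (m s : ℕ) : ℕ := s / 2 / m

def col (k m s : ℕ) : ℕ := k * (s % 2) + (k - 1 - block m s)

def row (m s : ℕ) : ℕ := (s / 2 + 2 * (s % 2)) % m

def label (k m s : ℕ) : ℕ := k * s - block m s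

variable {k m s t : ℕ}

lemma block_le (hs : s < 2 * k * m) : block m s ≤ k - 1 := by
  have : s / 2 < k * m := by rw [mul_assoc] at hs; omega
  have : s / 2 / m < k := Nat.div_lt_of_lt_mul (by rwa [mul_comm])
  exact Nat.le_sub_one_of_lt this

lemma block_mono : Monotone (block m) :=
  fun _ _ h ↦ Nat.div_le_div_right (Nat.div_le_div_right h)

lemma block_add_two_le (hm : m ≠ 0) (s : ℕ) : block m (s + 2) ≤ block m s + 1 := by
  calc (s + 2) / 2 / m ≤ (s / 2 + m) / m := Nat.div_le_div_right (by omega)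
    _ = s / 2 / m + 1 := Nat.add_div_right _ (Nat.pos_of_ne_zero hm)

lemma label_cast (hk : k ≠ 0) (s : ℕ) : (label k m s : ℤ) = k * s - block m s := by
  have : block m s ≤ k * s :=
    (Nat.div_le_self _ _).trans <| (Nat.div_le_self _ _).trans (Nat.le_mul_of_pos_left s
      (Nat.pos_of_ne_zero hk))
  rw [label, Nat.cast_sub this, Nat.cast_mul]

lemma label_mono (hk : k ≠ 0) (hm : m ≠ 0) : Monotone (label k m) := by
  refine monotone_nat_of_le_succ fun s ↦ ?_
  have := (block_mono (m := m) (Nat.le_succ (s + 1))).trans (block_add_two_le hm s)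
  have : (1 : ℤ) ≤ k := by exact_mod_cast Nat.one_le_iff_ne_zero.2 hk
  zify
  rw [label_cast hk, label_cast hk]
  push_cast
  linarith

lemma label_zero : label k m 0 = 0 := by simp [label]

lemma label_last (hk : k ≠ 0) (hm : m ≠ 0) :
    label k m (2 * k * m - 1) = 2 * k ^ 2 * m - 2 * k + 1 := by
  have hk1 : 1 ≤ k := Nat.one_le_iff_ne_zero.2 hk
  have hkm : m ≤ k * m := Nat.le_mul_of_pos_left m hk1
  have hblock : block m (2 * k * m - 1) = k - 1 := by
    have : (k - 1) * m = k * m - m := Nat.sub_one_mul k m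
    rw [block, show (2 * k * m - 1) / 2 = (m - 1) + (k - 1) * m by rw [mul_assoc]; omega,
      Nat.add_mul_div_right _ _ (by omega), Nat.div_eq_of_lt (by omega), zero_add]
  have h1 : 1 ≤ 2 * k * m := by rw [mul_assoc]; omega
  have h2 : 2 * k ≤ 2 * k ^ 2 * m := by nlinarith [Nat.one_le_iff_ne_zero.2 hm]
  zify [h2]
  rw [label_cast hk, hblock]
  push_cast [h1, hk1]
  ring

lemma col_cast (hs : s < 2 * k * m) :
    (col k m s : ℤ) = k * (s % 2 : ℕ) + k - 1 - block m s := by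
  have hq := block_le hs
  have hk : k ≠ 0 := by rintro rfl; simp at hs
  rw [col, Nat.cast_add, Nat.cast_mul, Nat.cast_sub hq, Nat.cast_sub (by omega)]
  push_cast
  ring

lemma col_lt (hk : k ≠ 0) (s : ℕ) : col k m s < 2 * k := by
  rcases Nat.mod_two_eq_zero_or_one s with h | h <;> simp only [col, h] <;> omega

lemma row_lt (hm : m ≠ 0) (s : ℕ) : row m s < m := Nat.mod_lt _ (Nat.pos_of_ne_zero hm)

lemma eq_of_col_eq_of_row_eq (hs : s < 2 * k * m) (ht : t < 2 * k * m)
    (hcol : col k m s = col k m t) (hrow : row m s = row m t) : s = t := by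
  have hqs := block_le hs
  have hqt := block_le ht
  have hk : k ≠ 0 := by rintro rfl; simp at hs
  have hdiv (h : block m s = block m t) (hmod : s / 2 % m = t / 2 % m) : s / 2 = t / 2 :=
    Nat.ext_div_mod h hmod
  simp only [col, row] at hcol hrow
  rcases Nat.mod_two_eq_zero_or_one s with hs2 | hs2 <;>
    rcases Nat.mod_two_eq_zero_or_one t with ht2 | ht2 <;>
    simp only [hs2, ht2, mul_zero, mul_one, add_zero] at hcol hrow
  · have := hdiv (by omega) hrow
    omega
  · omega
  · omega
  · have := hdiv (by omega) (Nat.ModEq.add_right_cancel' 2 hrow)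
    omega

lemma row_ne (hm : 3 ≤ m) (hst : s < t) (ht : t ≤ s + 2) : row m s ≠ row m t := by
  unfold row
  generalize ha : s / 2 + 2 * (s % 2) = a
  generalize hb : t / 2 + 2 * (t % 2) = b
  rcases (by omega : b = a + 2 ∨ b = a + 1 ∨ a = b + 1) with rfl | rfl | rfl
  · exact (Nat.add_mod_ne_mod (by omega) (by omega)).symm
  · exact (Nat.add_mod_ne_mod (by omega) (by omega)).symm
  · exact Nat.add_mod_ne_mod (by omega) (by omega)

lemma two_mul_le_abs_col_sub_add_label_sub (hk : k ≠ 0) (hm : m ≠ 0) (hst : s < t)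
    (ht2 : t ≤ s + 2) (ht : t < 2 * k * m) :
    2 * k ≤ |(col k m s : ℤ) - col k m t| + ((label k m t : ℤ) - label k m s) := by
  have hblock : block m s ≤ block m t ∧ block m t ≤ block m s + 1 :=
    ⟨block_mono hst.le, (block_mono (m := m) ht2).trans (block_add_two_le hm s)⟩
  have hpair : s % 2 = 0 → t = s + 1 → block m t = block m s := by
    rintro hs rfl; simp only [block]; rw [show (s + 1) / 2 = s / 2 by omega]
  have hcols := col_cast (hst.trans ht)
  have hcolt := col_cast ht
  have := le_abs_self ((col k m s : ℤ) - col k m t)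
  have := neg_abs_le ((col k m s : ℤ) - col k m t)
  rw [label_cast hk, label_cast hk]
  rcases (by omega : t = s + 1 ∨ t = s + 2) with rfl | rfl <;>
    rcases Nat.mod_two_eq_zero_or_one s with hs | hs <;>
    simp only [Nat.add_mod s, hs] at hcols hcolt hpair <;> norm_num at hcols hcolt hpair
  all_goals push_cast; linarith [hblock.1, hblock.2]

lemma two_mul_le_label_sub (hk : k ≠ 0) (hst : s + 3 ≤ t) (ht : t < 2 * k * m) :
    2 * k ≤ (label k m t : ℤ) - label k m s := by
  have : (k : ℤ) * 3 ≤ k * t - k * s := by nlinarith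
  have := block_le ht
  have : 1 ≤ k := Nat.one_le_iff_ne_zero.2 hk
  rw [label_cast hk, label_cast hk]
  omega

def vertex (k m : ℕ) [NeZero k] [NeZero m] (s : ℕ) : Fin (2 * k) × Fin m :=
  (⟨col k m s, col_lt (NeZero.ne k) s⟩, ⟨row m s, row_lt (NeZero.ne m) s⟩)

section Vertex

variable [NeZero k] [NeZero m]

lemma vertex_injOn : Set.InjOn (vertex k m) (Set.Iio (2 * k * m)) := fun _ hs _ ht h ↦
  eq_of_col_eq_of_row_eq hs ht (congrArg (·.1.val) h) (congrArg (·.2.val) h)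

lemma add_one_le_dist_vertex_add (hm : 3 ≤ m) (hst : s < t) (ht : t < 2 * k * m) :
    (2 * k : ℕ) + 1 ≤ ((pathGraph (2 * k) □ (⊤ : SimpleGraph (Fin m))).dist
      (vertex k m s) (vertex k m t) : ℤ) + ((label k m t : ℤ) - label k m s) := by
  have hk := NeZero.ne k
  rcases le_or_gt t (s + 2) with hnear | hfar
  · rw [dist_pathGraph_boxProd_top]
    simp only [vertex, Fin.mk.injEq, if_neg (row_ne hm hst hnear)]
    push_cast
    linarith [two_mul_le_abs_col_sub_add_label_sub hk (by omega) hst hnear ht]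
  · have hne : vertex k m s ≠ vertex k m t := fun h ↦
      hst.ne (vertex_injOn (hst.trans ht) ht h)
    have := ((pathGraph_preconnected _).boxProd preconnected_top _ _).pos_dist_of_ne hne
    push_cast
    linarith [two_mul_le_label_sub hk hfar ht]

end Vertex

end PathBoxComplete

open PathBoxComplete in
theorem exists_isRadioLabeling_pathGraph_boxProd_top {n m : ℕ} (hn : n ≠ 0) (he : Even n)
    (hm : 3 ≤ m) : ∃ φ : Fin n × Fin m → ℕ,
      IsRadioLabeling (pathGraph n □ (⊤ : SimpleGraph (Fin m))) φ ∧
        2 * span φ = m * n ^ 2 - 2 * n + 2 := by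
  obtain ⟨k, rfl⟩ := even_iff_two_dvd.1 he
  have hk : k ≠ 0 := by omega
  have : NeZero k := ⟨hk⟩
  have : NeZero m := ⟨by omega⟩
  let e : Fin (2 * k * m) ≃ Fin (2 * k) × Fin m := by
    refine Equiv.ofBijective (fun s ↦ vertex k m s) ?_
    rw [Fintype.bijective_iff_injective_and_card]
    refine ⟨fun s t h ↦ Fin.ext (vertex_injOn s.isLt t.isLt h), by simp [mul_assoc]⟩
  have : Nontrivial (Fin m) := Fin.nontrivial_iff_two_le.2 (by omega)
  have hN : 0 < 2 * k * m := by positivity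
  set ψ : Fin (2 * k * m) → ℕ := fun s ↦ label k m s
  refine ⟨ψ ∘ e.symm, IsRadioLabeling.of_lt e _ fun s t hst ↦ ?_, ?_⟩
  · rw [diam_pathGraph_boxProd_top hn, abs_sub_comm]
    exact (add_one_le_dist_vertex_add hm hst t.isLt).trans
      (add_le_add_right (le_abs_self _) _)
  · have hφ (s : Fin (2 * k * m)) : (ψ ∘ e.symm) (e s) = label k m s := by simp [ψ]
    rw [span_eq_of_le (φ := ψ ∘ e.symm) (T := label k m (2 * k * m - 1))
      (fun v ↦ label_mono hk (by omega) (by omega : (e.symm v : ℕ) ≤ 2 * k * m - 1))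
      (hφ ⟨_, Nat.sub_one_lt_of_lt hN⟩) ((hφ ⟨0, hN⟩).trans label_zero),
      label_last hk (by omega)]
    zify [show 2 * k ≤ 2 * k ^ 2 * m by nlinarith,
      show 2 * (2 * k) ≤ m * (2 * k) ^ 2 by nlinarith]
    ring

theorem stmt_11 (n m : ℕ) (hn : 4 ≤ n) (he : Even n) (hm : 3 ≤ m) :
    2 * radioNumber (pathGraph n □ (⊤ : SimpleGraph (Fin m)))
      = m * n ^ 2 - 2 * n + 2 := by
  obtain ⟨φ, hφ, hspan⟩ := exists_isRadioLabeling_pathGraph_boxProd_top (by omega) he hm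
  rw [radioNumber_eq ⟨φ, hφ, rfl⟩ fun ψ hψ ↦ ?_, hspan]
  have := hψ.pathGraph_boxProd_top_le_two_mul_span (by omega) he (by omega)
  omega
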